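/- For positive integers r1, r2 and k with 1 ≤ k ≤ r1 + r2, the coefficient c_k(r1,r2;q) := ([r1+r2]_q/[k]_q) · Σ_{j=0}^k (-1)^{k-j} [k choose j]_q q^{C(k-j,2)} [j+r1-1 choose r1]_q [j+r2-1 choose r2]_q satisfies c_k(r1,r2;q) = q^{k(k-1) - r1·r2} · (r1+r2 choose r1,k)_q, where (n choose p,k)_q = ([n]_q/[k]_q) · Σ_{r≥0} [p choose r]_q [n-p choose r]_q [n-r-1 choose k-r-1]_q q^{(n-p)p + r(r-k)} and C(a,2) = a(a-1)/2. -/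

import Mathlib

open Finset

/-- The variable `q`, as a rational function over `ℚ`. -/
noncomputable def q : RatFunc ℚ := RatFunc.X

/-- The q-integer `[m]_q = (1 - q^m)/(1 - q)`. -/
noncomputable def qint (m : ℕ) : RatFunc ℚ := (1 - q ^ m) / (1 - q)

/-- The q-integer for an integer exponent, `[x; q] = (q^x - 1)/(q - 1)`. -/
noncomputable def qintZ (x : ℤ) : RatFunc ℚ := (q ^ x - 1) / (q - 1)

/-- The q-factorial `[m]!_q`. -/
noncomputable def qfac (m : ℕ) : RatFunc ℚ := ∏ i ∈ Finset.range m, qint (i + 1)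

/-- The Gaussian q-binomial coefficient `[a choose b]_q`, zero when `b < 0` or `b > a`. -/
noncomputable def qbin (a b : ℤ) : RatFunc ℚ :=
  if 0 ≤ b ∧ b ≤ a then qfac a.toNat / (qfac b.toNat * qfac (a - b).toNat) else 0

/-- The first generalized q-binomial coefficient `(n choose p, k)_q`:
`([n]_q/[k]_q) · Σ_{r≥0} [p choose r]_q [n-p choose r]_q [n-r-1 choose k-r-1]_q
  q^{(n-p)p + r(r-k)}`. -/
noncomputable def gchoose (n p k : ℕ) : RatFunc ℚ :=
  (qint n / qint k) *
    ∑ r ∈ Finset.range (n + 1),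
      qbin p r * qbin ((n : ℤ) - p) r * qbin ((n : ℤ) - r - 1) ((k : ℤ) - r - 1) *
        q ^ (((n : ℤ) - p) * p + (r : ℤ) * ((r : ℤ) - k))


/-!
With `n = r₁ + r₂`, the product `[j+r₁-1, r₁] [j+r₂-1, r₂]` equals
`∑ r, q^(r²) [r₁, r] [r₂, r] [j+n-r-1, n]`: both sides satisfy the recurrence
`[j]² F(j+1) = [j+r₁] [j+r₂] F(j)`, which for the sum telescopes in `r`.
The alternating sum over `j` is a `k`-fold q-difference, and by the q-Pascal rule it sends
`j ↦ [j+m, n]` to `q^(k(m+k-n)) [m, n-k]`. Taking `m = n-r-1` and using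
`[m, n-k] = [m, k-r-1]` gives the `r`-th term of `(n choose r₁, k)_q`.
-/

lemma q_ne_zero : q ≠ 0 := RatFunc.X_ne_zero

lemma q_pow_ne_one {m : ℕ} (hm : m ≠ 0) : q ^ m ≠ 1 := by
  intro h
  have hpoly : (Polynomial.X ^ m : Polynomial ℚ) = 1 := RatFunc.algebraMap_injective ℚ <| by
    rw [map_pow, map_one, RatFunc.algebraMap_X]; exact h
  simpa [hm] using congrArg Polynomial.natDegree hpoly

lemma one_sub_q_ne_zero : (1 : RatFunc ℚ) - q ≠ 0 :=
  sub_ne_zero.2 (by simpa using (q_pow_ne_one one_ne_zero).symm)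

lemma qint_ne_zero {m : ℕ} (hm : m ≠ 0) : qint m ≠ 0 :=
  div_ne_zero (sub_ne_zero.2 (q_pow_ne_one hm).symm) one_sub_q_ne_zero

@[simp] lemma qint_zero : qint 0 = 0 := by simp [qint]

lemma qint_add (u v : ℕ) : qint (u + v) = qint u + q ^ u * qint v := by
  have := one_sub_q_ne_zero
  simp only [qint, pow_add]
  field_simp
  ring

@[simp] lemma qfac_zero : qfac 0 = 1 := by simp [qfac]

lemma qfac_succ (m : ℕ) : qfac (m + 1) = qfac m * qint (m + 1) := by
  simp [qfac, Finset.prod_range_succ]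

lemma qfac_ne_zero (m : ℕ) : qfac m ≠ 0 :=
  Finset.prod_ne_zero_iff.2 fun i _ => qint_ne_zero (Nat.succ_ne_zero i)

lemma qbin_natCast_of_le {a b : ℕ} (h : b ≤ a) : qbin a b = qfac a / (qfac b * qfac (a - b)) := by
  simp only [qbin, if_pos (And.intro (Int.natCast_nonneg b) (Int.ofNat_le.2 h)),
    Int.toNat_natCast, show ((a : ℤ) - b).toNat = a - b by omega]

lemma qbin_eq_zero_of_lt {a b : ℤ} (h : a < b) : qbin a b = 0 := if_neg (by omega)

lemma qbin_eq_zero_of_neg {a b : ℤ} (h : b < 0) : qbin a b = 0 := if_neg (by omega)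

lemma qbin_self {a : ℤ} (h : 0 ≤ a) : qbin a a = 1 := by
  rw [qbin, if_pos ⟨h, le_rfl⟩, sub_self, Int.toNat_zero, qfac_zero, mul_one,
    div_self (qfac_ne_zero _)]

lemma qbin_zero_right {a : ℤ} (h : 0 ≤ a) : qbin a 0 = 1 := by
  rw [qbin, if_pos ⟨le_rfl, h⟩, sub_zero, Int.toNat_zero, qfac_zero, one_mul,
    div_self (qfac_ne_zero _)]

lemma qbin_symm (a b : ℤ) : qbin a b = qbin a (a - b) := by
  by_cases h : 0 ≤ b ∧ b ≤ a
  · rw [qbin, qbin, if_pos h, if_pos (by omega), sub_sub_cancel, mul_comm]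
  · rw [qbin, qbin, if_neg h, if_neg (by omega)]

lemma qbin_succ_left {a : ℤ} (ha : 0 ≤ a) (b : ℤ) :
    qbin (a + 1) b = qbin a (b - 1) + q ^ b * qbin a b := by
  rcases lt_trichotomy b 0 with hb | rfl | hb
  · simp [qbin_eq_zero_of_neg hb, qbin_eq_zero_of_neg (show b - 1 < 0 by omega)]
  · simp [qbin_zero_right ha, qbin_zero_right (show 0 ≤ a + 1 by omega),
      qbin_eq_zero_of_neg (show (-1 : ℤ) < 0 by omega)]
  rcases lt_trichotomy b (a + 1) with hba | rfl | hba
  · obtain ⟨c, d, rfl, rfl⟩ : ∃ c d : ℕ, b = c + 1 ∧ a = c + 1 + d :=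
      ⟨(b - 1).toNat, (a - b).toNat, by omega, by omega⟩
    have hc := qfac_ne_zero c
    have hd := qfac_ne_zero d
    have hc1 := qint_ne_zero c.succ_ne_zero
    have hd1 := qint_ne_zero d.succ_ne_zero
    have key := qint_add (c + 1) (d + 1)
    rw [show (c : ℤ) + 1 + d + 1 = ((c + 1 + d + 1 : ℕ) : ℤ) by push_cast; ring,
      show (c : ℤ) + 1 + d = ((c + 1 + d : ℕ) : ℤ) by push_cast; ring,
      show (c : ℤ) + 1 - 1 = (c : ℤ) by ring,
      show (c : ℤ) + 1 = ((c + 1 : ℕ) : ℤ) by push_cast; ring, zpow_natCast,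
      qbin_natCast_of_le (by omega), qbin_natCast_of_le (by omega), qbin_natCast_of_le (by omega),
      show c + 1 + d + 1 - (c + 1) = d + 1 by omega, show c + 1 + d - c = d + 1 by omega,
      Nat.add_sub_cancel_left, qfac_succ (c + 1 + d), qfac_succ c, qfac_succ d,
      show c + 1 + d + 1 = c + 1 + (d + 1) by ring, key]
    field_simp
  · rw [qbin_self (by omega), add_sub_cancel_right, qbin_self ha,
      qbin_eq_zero_of_lt (lt_add_one a), mul_zero, add_zero]
  · simp [qbin_eq_zero_of_lt hba, qbin_eq_zero_of_lt (show a < b - 1 by omega),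
      qbin_eq_zero_of_lt (show a < b by omega)]

lemma qbin_succ_left' {b : ℤ} (hb : 1 ≤ b) (a : ℤ) :
    qbin (a + 1) b = q ^ (a + 1 - b) * qbin a (b - 1) + qbin a b := by
  by_cases ha : 0 ≤ a
  · rw [qbin_symm, qbin_succ_left ha, qbin_symm a (a + 1 - b - 1), qbin_symm a (a + 1 - b)]
    ring_nf
  · rw [qbin_eq_zero_of_lt (by omega), qbin_eq_zero_of_lt (a := a) (by omega),
      qbin_eq_zero_of_lt (a := a) (by omega), mul_zero, add_zero]

lemma qbin_mul_qint_succ (a b : ℕ) :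
    qbin (a + b + 1 : ℕ) b * qint (a + 1) = qint (a + b + 1) * qbin (a + b : ℕ) b := by
  rw [qbin_natCast_of_le (by omega), qbin_natCast_of_le (by omega), show a + b + 1 - b = a + 1 by omega,
    Nat.add_sub_cancel, qfac_succ (a + b), qfac_succ a]
  have := qfac_ne_zero a
  have := qfac_ne_zero b
  have := qint_ne_zero a.succ_ne_zero
  field_simp

lemma qbin_succ_right_mul_qint (r d : ℕ) :
    qbin (r + d : ℕ) (r + 1 : ℕ) * qint (r + 1) = qbin (r + d : ℕ) r * qint d := by
  obtain rfl | ⟨e, rfl⟩ : d = 0 ∨ ∃ e, d = e + 1 := by rcases d with _ | e <;> simp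
  · rw [qbin_eq_zero_of_lt (by omega), qint_zero, zero_mul, mul_zero]
  rw [qbin_natCast_of_le (by omega), qbin_natCast_of_le (by omega), show r + (e + 1) - (r + 1) = e by omega,
    Nat.add_sub_cancel_left, qfac_succ r, qfac_succ e]
  have := qfac_ne_zero r
  have := qfac_ne_zero e
  have := qint_ne_zero r.succ_ne_zero
  have := qint_ne_zero e.succ_ne_zero
  field_simp

/-- By the q-binomial theorem, `qDiff k f = ((E - 1) (E - q) ⋯ (E - q^(k-1)) f) 0`
for the shift `E f = fun j => f (j + 1)`. -/
noncomputable def qDiff (k : ℕ) (f : ℕ → RatFunc ℚ) : RatFunc ℚ :=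
  ∑ j ∈ range (k + 1), (-1) ^ (k - j) * qbin k j * q ^ ((k - j) * (k - j - 1) / 2) * f j

lemma qDiff_succ (k : ℕ) (f : ℕ → RatFunc ℚ) :
    qDiff (k + 1) f = qDiff k (fun j => f (j + 1)) - q ^ k * qDiff k f := by
  have hpascal : ∀ j : ℕ, qbin (k + 1 : ℕ) j = qbin k ((j : ℤ) - 1) + q ^ j * qbin k j := by
    intro j
    rw [Nat.cast_succ, qbin_succ_left (Nat.cast_nonneg k), zpow_natCast]
  have hshift : ∑ j ∈ range (k + 2), (-1) ^ (k + 1 - j) * qbin k ((j : ℤ) - 1) *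
      q ^ ((k + 1 - j) * (k + 1 - j - 1) / 2) * f j = qDiff k (fun j => f (j + 1)) := by
    rw [sum_range_succ', Nat.cast_zero, zero_sub, qbin_eq_zero_of_neg (by norm_num)]
    simp only [mul_zero, zero_mul, add_zero, Nat.cast_succ, add_sub_cancel_right,
      Nat.add_sub_add_right, qDiff]
  have hscale : ∑ j ∈ range (k + 2), (-1) ^ (k + 1 - j) * (q ^ j * qbin k j) *
      q ^ ((k + 1 - j) * (k + 1 - j - 1) / 2) * f j = -(q ^ k * qDiff k f) := by
    rw [sum_range_succ, qbin_eq_zero_of_lt (by push_cast; omega), mul_zero, mul_zero, zero_mul,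
      zero_mul, add_zero, qDiff, mul_sum, ← sum_neg_distrib]
    refine sum_congr rfl fun j hj => ?_
    obtain ⟨i, rfl⟩ : ∃ i, k = j + i := ⟨k - j, by simp at hj; omega⟩
    rw [show j + i + 1 - j = i + 1 by omega, Nat.triangle_succ, Nat.add_sub_cancel_left]
    ring
  simp only [qDiff, hpascal, mul_add, add_mul, sum_add_distrib, hshift, hscale]
  ring

lemma qDiff_qbin {n k : ℕ} (hk : k ≤ n) (m : ℤ) :
    qDiff k (fun j => qbin (j + m) n) = q ^ ((k : ℤ) * (m + k - n)) * qbin m ((n : ℤ) - k) := by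
  induction k generalizing m with
  | zero => simp [qDiff, qbin_self]
  | succ k ih =>
    have hshift : (fun j : ℕ => qbin (((j + 1 : ℕ) : ℤ) + m) n) =
        fun j : ℕ => qbin (j + (m + 1)) n := by
      funext j; push_cast; ring_nf
    rw [qDiff_succ, hshift, ih (by omega), ih (by omega),
      qbin_succ_left' (show 1 ≤ (n : ℤ) - k by omega), ← zpow_natCast,
      show (n : ℤ) - k - 1 = n - (k + 1 : ℕ) by push_cast; ring,
      show ((k + 1 : ℕ) : ℤ) * (m + (k + 1 : ℕ) - n) =
          k * (m + k - n) + k + (m + 1 - (n - k)) by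
        push_cast; ring,
      show (k : ℤ) * (m + 1 + k - n) = k * (m + k - n) + k by ring,
      zpow_add₀ q_ne_zero, zpow_add₀ q_ne_zero, zpow_add₀ q_ne_zero]
    ring

lemma qDiff_sum_mul {ι : Type*} (k : ℕ) (s : Finset ι) (c : ι → RatFunc ℚ)
    (g : ι → ℕ → RatFunc ℚ) :
    qDiff k (fun j => ∑ r ∈ s, c r * g r j) = ∑ r ∈ s, c r * qDiff k (g r) := by
  simp only [qDiff, mul_sum]
  rw [sum_comm]
  exact sum_congr rfl fun r _ => sum_congr rfl fun j _ => by ring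

lemma qint_telescoping_identity (r t u v : ℕ) :
    qint (r + t + 1) ^ 2 * qint (2 * r + t + u + v + 1) -
        qint (2 * r + t + u + 1) * qint (2 * r + t + v + 1) * qint (t + 1) =
      q ^ (t + 1) * (qint r ^ 2 * qint (2 * r + t + u + v + 1) -
        q ^ (2 * r) * qint u * qint v * qint (t + 1)) := by
  have := one_sub_q_ne_zero
  simp only [qint]
  field_simp
  ring

section ProductFormula

variable (a b : ℕ)

noncomputable def prodSummand (j r : ℕ) : RatFunc ℚ :=
  q ^ (r * r) * qbin a r * qbin b r * qbin ((j : ℤ) + ((a + b : ℕ) - r - 1)) (a + b : ℕ)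

noncomputable def prodCertificate (j r : ℕ) : RatFunc ℚ :=
  q ^ (j + r * (r - 1)) * qint r ^ 2 * qbin a r * qbin b r *
    qbin ((j : ℤ) + ((a + b : ℕ) - r)) (a + b : ℕ)

lemma prodSummand_recurrence_of_lt (r t u v : ℕ) :
    qint (r + t + 1) ^ 2 * prodSummand (r + u) (r + v) (r + t + 1 + 1) r -
        qint (r + t + 1 + (r + u)) * qint (r + t + 1 + (r + v)) *
          prodSummand (r + u) (r + v) (r + t + 1) r =
      prodCertificate (r + u) (r + v) (r + t + 1) r -
        prodCertificate (r + u) (r + v) (r + t + 1) (r + 1) := by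
  unfold prodSummand prodCertificate
  set n := r + u + (r + v)
  rw [show (((r + t + 1 + 1 : ℕ) : ℤ) + ((n : ℤ) - r - 1)) = ((t + n + 1 : ℕ) : ℤ) by
      push_cast; ring,
    show (((r + t + 1 : ℕ) : ℤ) + ((n : ℤ) - r - 1)) = ((t + n : ℕ) : ℤ) by
      push_cast; ring,
    show (((r + t + 1 : ℕ) : ℤ) + ((n : ℤ) - r)) = ((t + n + 1 : ℕ) : ℤ) by
      push_cast; ring,
    show (((r + t + 1 : ℕ) : ℤ) + ((n : ℤ) - (r + 1 : ℕ))) = ((t + n : ℕ) : ℤ) by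
      push_cast; ring,
    show r + t + 1 + r * (r - 1) = r * r + (t + 1) by cases r <;> simp; ring,
    show r + t + 1 + (r + 1) * (r + 1 - 1) = r * r + (t + 1) + 2 * r by simp; ring]
  have habs := qbin_mul_qint_succ t n
  have hu := qbin_succ_right_mul_qint r u
  have hv := qbin_succ_right_mul_qint r v
  have hsc := qint_telescoping_identity r t u v
  rw [show 2 * r + t + u + v + 1 = t + n + 1 by omega,
    show 2 * r + t + u + 1 = r + t + 1 + (r + u) by omega,
    show 2 * r + t + v + 1 = r + t + 1 + (r + v) by omega] at hsc
  apply mul_right_cancel₀ (qint_ne_zero t.succ_ne_zero)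
  linear_combination
    (q ^ (r * r) * qint (r + t + 1) ^ 2 * qbin ↑(r + u) ↑r * qbin ↑(r + v) ↑r
      - q ^ (r * r + (t + 1)) * qint r ^ 2 * qbin ↑(r + u) ↑r * qbin ↑(r + v) ↑r) * habs
    + (q ^ (r * r + (t + 1) + 2 * r) * qbin ↑(t + n) ↑n * qint (t + 1) * qint (r + 1) *
        qbin ↑(r + v) ↑(r + 1)) * hu
    + (q ^ (r * r + (t + 1) + 2 * r) * qbin ↑(t + n) ↑n * qint (t + 1) *
        qbin ↑(r + u) ↑r * qint u) * hv
    + (q ^ (r * r) * qbin ↑(r + u) ↑r * qbin ↑(r + v) ↑r * qbin ↑(t + n) ↑n) * hsc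

lemma prodSummand_recurrence {j : ℕ} (hj : 1 ≤ j) (r : ℕ) :
    qint j ^ 2 * prodSummand a b (j + 1) r - qint (j + a) * qint (j + b) * prodSummand a b j r =
      prodCertificate a b j r - prodCertificate a b j (r + 1) := by
  by_cases hr : r ≤ a ∧ r ≤ b
  swap
  · rcases not_and_or.1 hr with h | h
    · simp [prodSummand, prodCertificate, qbin_eq_zero_of_lt (show (a : ℤ) < r by omega),
        qbin_eq_zero_of_lt (show (a : ℤ) < r + 1 by omega)]
    · simp [prodSummand, prodCertificate, qbin_eq_zero_of_lt (show (b : ℤ) < r by omega),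
        qbin_eq_zero_of_lt (show (b : ℤ) < r + 1 by omega)]
  obtain ⟨u, rfl⟩ : ∃ u, a = r + u := ⟨a - r, by omega⟩
  obtain ⟨v, rfl⟩ : ∃ v, b = r + v := ⟨b - r, by omega⟩
  rcases lt_or_ge r j with hrj | hrj
  · obtain ⟨t, rfl⟩ : ∃ t, j = r + t + 1 := ⟨j - r - 1, by omega⟩
    exact prodSummand_recurrence_of_lt r t u v
  unfold prodSummand prodCertificate
  set n := r + u + (r + v)
  rcases eq_or_lt_of_le hrj with rfl | hrj
  · rw [show ((j + 1 : ℕ) : ℤ) + ((n : ℤ) - j - 1) = n by push_cast; ring,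
      show (j : ℤ) + ((n : ℤ) - j) = n by ring, qbin_self (by positivity),
      qbin_eq_zero_of_lt (show (j : ℤ) + ((n : ℤ) - j - 1) < n by omega),
      qbin_eq_zero_of_lt (show (j : ℤ) + ((n : ℤ) - (j + 1 : ℕ)) < n by omega),
      show j + j * (j - 1) = j * j by cases j <;> simp; ring]
    ring
  · rw [qbin_eq_zero_of_lt (show ((j + 1 : ℕ) : ℤ) + ((n : ℤ) - r - 1) < n by omega),
      qbin_eq_zero_of_lt (show (j : ℤ) + ((n : ℤ) - r - 1) < n by omega),
      qbin_eq_zero_of_lt (show (j : ℤ) + ((n : ℤ) - r) < n by omega),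
      qbin_eq_zero_of_lt (show (j : ℤ) + ((n : ℤ) - (r + 1 : ℕ)) < n by omega)]
    ring

lemma sum_prodSummand_recurrence {j : ℕ} (hj : 1 ≤ j) :
    qint j ^ 2 * ∑ r ∈ range (a + b + 1), prodSummand a b (j + 1) r =
      qint (j + a) * qint (j + b) * ∑ r ∈ range (a + b + 1), prodSummand a b j r := by
  rw [mul_sum, mul_sum, ← sub_eq_zero, ← sum_sub_distrib]
  simp only [prodSummand_recurrence a b hj, sum_range_sub', prodCertificate, qint_zero,
    qbin_eq_zero_of_lt (show (a : ℤ) < (a + b + 1 : ℕ) by omega)]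
  ring

lemma qbin_mul_qbin_eq_sum (j : ℕ) :
    qbin ((j : ℤ) + a - 1) a * qbin ((j : ℤ) + b - 1) b =
      ∑ r ∈ range (a + b + 1), prodSummand a b j r := by
  rcases j with _ | i
  · rw [qbin_eq_zero_of_lt (by omega), zero_mul, eq_comm]
    refine sum_eq_zero fun r _ => ?_
    rw [prodSummand, qbin_eq_zero_of_lt (b := ((a + b : ℕ) : ℤ)) (by omega), mul_zero]
  have hP : ∀ (c i : ℕ), qbin (((i + 1 : ℕ) : ℤ) + c - 1) c = qbin (i + c : ℕ) c := by
    intro c i; push_cast; ring_nf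
  simp only [hP]
  induction i with
  | zero =>
    rw [zero_add, zero_add, qbin_self (by positivity), qbin_self (by positivity), one_mul,
      sum_eq_single 0 (fun r _ hr => by
        rw [prodSummand, qbin_eq_zero_of_lt (b := ((a + b : ℕ) : ℤ)) (by omega), mul_zero])
        (by simp)]
    simp [prodSummand, qbin_zero_right, qbin_self (show (0 : ℤ) ≤ a + b by positivity)]
  | succ i ih =>
    apply mul_left_cancel₀ (pow_ne_zero 2 (qint_ne_zero i.succ_ne_zero))
    rw [sum_prodSummand_recurrence a b (by omega), ← ih, show i + 1 + a = i + a + 1 by ring,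
      show i + 1 + b = i + b + 1 by ring]
    have ha := qbin_mul_qint_succ i a
    have hb := qbin_mul_qint_succ i b
    linear_combination (qint (i + 1) * qbin (i + b + 1 : ℕ) b) * ha +
      (qint (i + a + 1) * qbin (i + a : ℕ) a) * hb

end ProductFormula

theorem c_eq_gchoose_general (r1 r2 k : ℕ) (hk2 : k ≤ r1 + r2) :
    (qint (r1 + r2) / qint k) *
        ∑ j ∈ Finset.range (k + 1),
          (-1 : RatFunc ℚ) ^ (k - j) * qbin k j * q ^ ((k - j) * (k - j - 1) / 2) *
            qbin ((j : ℤ) + r1 - 1) r1 * qbin ((j : ℤ) + r2 - 1) r2 =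
      q ^ ((k : ℤ) * ((k : ℤ) - 1) - (r1 : ℤ) * r2) * gchoose (r1 + r2) r1 k := by
  have hdiff : ∑ j ∈ range (k + 1), (-1 : RatFunc ℚ) ^ (k - j) * qbin k j *
        q ^ ((k - j) * (k - j - 1) / 2) * qbin ((j : ℤ) + r1 - 1) r1 *
          qbin ((j : ℤ) + r2 - 1) r2 =
      qDiff k (fun j => qbin ((j : ℤ) + r1 - 1) r1 * qbin ((j : ℤ) + r2 - 1) r2) :=
    sum_congr rfl fun j _ => by ring
  simp only [hdiff, qbin_mul_qbin_eq_sum, prodSummand, qDiff_sum_mul, qDiff_qbin hk2, gchoose,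
    mul_left_comm _ (qint (r1 + r2) / qint k), mul_sum]
  refine sum_congr rfl fun r _ => ?_
  have hexp :
      q ^ (r * r) * q ^ ((k : ℤ) * (((r1 + r2 : ℕ) : ℤ) - r - 1 + k - (r1 + r2 : ℕ))) =
      q ^ ((k : ℤ) * (k - 1) - r1 * r2) * q ^ ((r2 : ℤ) * r1 + r * (r - k)) := by
    rw [← zpow_natCast, ← zpow_add₀ q_ne_zero, ← zpow_add₀ q_ne_zero]
    congr 1
    push_cast
    ring
  rw [show ((r1 + r2 : ℕ) : ℤ) - r1 = r2 by push_cast; ring,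
    qbin_symm (((r1 + r2 : ℕ) : ℤ) - r - 1),
    show ((r1 + r2 : ℕ) : ℤ) - r - 1 - ((r1 + r2 : ℕ) - k) = k - r - 1 by ring]
  linear_combination (qint (r1 + r2) / qint k * qbin r1 r * qbin r2 r *
    qbin (((r1 + r2 : ℕ) : ℤ) - r - 1) ((k : ℤ) - r - 1)) * hexp

theorem c_eq_gchoose (r1 r2 k : ℕ) (hr1 : 0 < r1) (hr2 : 0 < r2) (hk : 1 ≤ k)
    (hk2 : k ≤ r1 + r2) :
    (qint (r1 + r2) / qint k) *
        ∑ j ∈ Finset.range (k + 1),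
          (-1 : RatFunc ℚ) ^ (k - j) * qbin k j * q ^ ((k - j) * (k - j - 1) / 2) *
            qbin ((j : ℤ) + r1 - 1) r1 * qbin ((j : ℤ) + r2 - 1) r2 =
      q ^ ((k : ℤ) * ((k : ℤ) - 1) - (r1 : ℤ) * r2) * gchoose (r1 + r2) r1 k :=
  c_eq_gchoose_general r1 r2 k hk2
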